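/- If M = U D Vᵀ where D ∈ Sym(r) is positive definite and the stacked matrix [U; V] ∈ ℝ^{(m+n)×r} has orthonormal columns, with U ∈ ℝ^{m×r}, V ∈ ℝ^{n×r}, then ‖M‖_* ≤ (1/2) trace(D), with equality when U and V are obtained by scaling the compact SVD factors by 1/√2. -/

import Mathlib

open Matrix

open scoped ComplexOrder in
/-- The positive semidefinite square root of a positive semidefinite matrix
(the definition `Matrix.PosSemidef.sqrt` of the older Mathlib, since removed). -/
noncomputable def Matrix.PosSemidef.sqrt {n : Type*} [Fintype n] [DecidableEq n] {𝕜 : Type*}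
    [RCLike 𝕜] {A : Matrix n n 𝕜} (hA : A.PosSemidef) : Matrix n n 𝕜 :=
  hA.1.eigenvectorUnitary.1 * diagonal ((↑) ∘ (√·) ∘ hA.1.eigenvalues) *
  (star hA.1.eigenvectorUnitary : Matrix n n 𝕜)

/-- The nuclear norm of a real matrix: the sum of its singular values,
computed as the trace of the positive semidefinite square root of `Mᵀ * M`. -/
noncomputable def nuclearNorm {m n : ℕ} (M : Matrix (Fin m) (Fin n) ℝ) : ℝ :=
  (Matrix.posSemidef_conjTranspose_mul_self M).sqrt.trace

/-! Write `D = SᵀS`; then `M = A Bᵀ` with `A = U Sᵀ`, `B = V Sᵀ`, and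
`tr(AᵀA) + tr(BᵀB) = tr D` because `UᵀU + VᵀV = 1`. Let `qᵢ` be an orthonormal eigenbasis of
`MᵀM`; the vectors `M qᵢ` are orthogonal and their norms `σᵢ` are the singular values of `M`.
With `pᵢ = M qᵢ / σᵢ`,
`σᵢ = ⟪pᵢ, A Bᵀ qᵢ⟫ = ⟪Aᵀpᵢ, Bᵀqᵢ⟫ ≤ (‖Aᵀpᵢ‖² + ‖Bᵀqᵢ‖²) / 2`,
and Bessel's inequality for the columns of `A` and of `B` bounds the two sums by `tr(AᵀA)` and
`tr(BᵀB)`. When `UᵀU = VᵀV = 1/2`, `V D Vᵀ` is a positive semidefinite square root of `MᵀM`, so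
`‖M‖_* = tr(V D Vᵀ) = tr(D VᵀV) = tr D / 2`. -/

open scoped InnerProductSpace

section Bessel

variable {E ι : Type*} [NormedAddCommGroup E] [InnerProductSpace ℝ E]

/-- The nonzero `‖w i‖⁻¹ • w i` are orthonormal, and the others vanish since `‖0‖⁻¹ = 0`. -/
theorem sum_inner_inv_norm_smul_sq_le {w : ι → E} (hw : Pairwise fun i j ↦ ⟪w i, w j⟫_ℝ = 0)
    (s : Finset ι) (x : E) : ∑ i ∈ s, ⟪‖w i‖⁻¹ • w i, x⟫_ℝ ^ 2 ≤ ‖x‖ ^ 2 := by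
  classical
  have hon : Orthonormal ℝ fun i : {i // w i ≠ 0} ↦ ‖w i‖⁻¹ • w i := by
    refine ⟨fun i ↦ by simpa using norm_smul_inv_norm (𝕜 := ℝ) i.2, fun i j hij ↦ ?_⟩
    simp [real_inner_smul_left, real_inner_smul_right, hw (Subtype.coe_ne_coe.mpr hij)]
  calc ∑ i ∈ s, ⟪‖w i‖⁻¹ • w i, x⟫_ℝ ^ 2
      = ∑ i ∈ s.subtype (w · ≠ 0), ⟪‖w i‖⁻¹ • w i, x⟫_ℝ ^ 2 := by
        rw [Finset.sum_subtype_eq_sum_filter (fun i ↦ ⟪‖w i‖⁻¹ • w i, x⟫_ℝ ^ 2),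
          Finset.sum_filter_of_ne]
        rintro i - hi hwi
        simp [hwi] at hi
    _ ≤ ‖x‖ ^ 2 := by simpa using hon.sum_inner_products_le x

end Bessel

namespace Matrix

section Spectral

variable {n 𝕜 : Type*} [Fintype n] [DecidableEq n] [RCLike 𝕜]

open scoped ComplexOrder in
theorem PosSemidef.trace_sqrt {A : Matrix n n 𝕜} (hA : A.PosSemidef) :
    hA.sqrt.trace = ∑ i, (√(hA.1.eigenvalues i) : 𝕜) := by
  rw [PosSemidef.sqrt, trace_mul_cycle, Unitary.coe_star_mul_self, one_mul, trace_diagonal]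
  rfl

theorem IsHermitian.toEuclideanLin_eigenvectorBasis {A : Matrix n n 𝕜} (hA : A.IsHermitian)
    (i : n) :
    toEuclideanLin A (hA.eigenvectorBasis i) = hA.eigenvalues i • hA.eigenvectorBasis i := by
  ext1
  simp [toLpLin_apply, hA.mulVec_eigenvectorBasis]

open scoped MatrixOrder ComplexOrder

theorem PosSemidef.sqrt_eq_cfcSqrt {A : Matrix n n 𝕜} (hA : A.PosSemidef) :
    hA.sqrt = CFC.sqrt A := by
  rw [CFC.sqrt_eq_cfc, cfc_nnreal_eq_real _ A, hA.1.cfc_eq]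
  simp only [IsHermitian.cfc, Unitary.conjStarAlgAut_apply, PosSemidef.sqrt]
  congr 3
  ext i
  simp [hA.eigenvalues_nonneg i]

theorem PosSemidef.exists_eq_conjTranspose_mul_self {A : Matrix n n 𝕜} (hA : A.PosSemidef) :
    ∃ S : Matrix n n 𝕜, A = Sᴴ * S :=
  ⟨CFC.sqrt A, by
    rw [← star_eq_conjTranspose, (IsSelfAdjoint.of_nonneg (CFC.sqrt_nonneg A)).star_eq,
      CFC.sqrt_mul_sqrt_self A hA.nonneg]⟩

end Spectral

variable {m n r : Type*} [Fintype m] [Fintype n] [Fintype r] [DecidableEq m] [DecidableEq n]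

theorem inner_toEuclideanLin_transpose (A : Matrix m n ℝ) (x : EuclideanSpace ℝ m)
    (y : EuclideanSpace ℝ n) : ⟪toEuclideanLin Aᵀ x, y⟫_ℝ = ⟪x, toEuclideanLin A y⟫_ℝ := by
  rw [← conjTranspose_eq_transpose_of_trivial, toEuclideanLin_conjTranspose_eq_adjoint,
    LinearMap.adjoint_inner_left]

theorem inner_toEuclideanLin_mul_transpose (A : Matrix m r ℝ) (B : Matrix n r ℝ)
    (x : EuclideanSpace ℝ m) (y : EuclideanSpace ℝ n) :
    ⟪x, toEuclideanLin (A * Bᵀ) y⟫_ℝ = ⟪toEuclideanLin Aᵀ x, toEuclideanLin Bᵀ y⟫_ℝ := by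
  classical
  rw [inner_toEuclideanLin_transpose, toLpLin_mul, LinearMap.comp_apply]

theorem sum_norm_toEuclideanLin_transpose_sq_le_trace {ι : Type*} (A : Matrix m r ℝ)
    (s : Finset ι) (p : ι → EuclideanSpace ℝ m)
    (hp : ∀ x, ∑ i ∈ s, ⟪p i, x⟫_ℝ ^ 2 ≤ ‖x‖ ^ 2) :
    ∑ i ∈ s, ‖toEuclideanLin Aᵀ (p i)‖ ^ 2 ≤ (Aᵀ * A).trace := by
  classical
  have hcol : ∀ x k, (toEuclideanLin Aᵀ x) k = ⟪x, WithLp.toLp 2 (Aᵀ k)⟫_ℝ := by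
    intro x k
    simp [toLpLin_apply, mulVec, dotProduct, PiLp.inner_apply]
  calc ∑ i ∈ s, ‖toEuclideanLin Aᵀ (p i)‖ ^ 2
      = ∑ k, ∑ i ∈ s, ⟪p i, WithLp.toLp 2 (Aᵀ k)⟫_ℝ ^ 2 := by
        simp only [EuclideanSpace.norm_sq_eq, hcol, Real.norm_eq_abs, sq_abs]
        exact Finset.sum_comm
    _ ≤ ∑ k, ‖WithLp.toLp 2 (Aᵀ k)‖ ^ 2 := Finset.sum_le_sum fun k _ ↦ hp _
    _ = (Aᵀ * A).trace := by
        simp only [EuclideanSpace.norm_sq_eq]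
        simp [trace, mul_apply, sq]

theorem inner_toEuclideanLin_eigenvectorBasis (M : Matrix m n ℝ) (hX : (Mᴴ * M).IsHermitian)
    (i j : n) :
    ⟪toEuclideanLin M (hX.eigenvectorBasis i), toEuclideanLin M (hX.eigenvectorBasis j)⟫_ℝ =
      if i = j then hX.eigenvalues i else 0 := by
  rw [← inner_toEuclideanLin_transpose, ← LinearMap.comp_apply, ← toLpLin_mul,
    ← conjTranspose_eq_transpose_of_trivial, hX.toEuclideanLin_eigenvectorBasis,
    real_inner_smul_left, hX.eigenvectorBasis.inner_eq_ite]
  simp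

theorem norm_toEuclideanLin_eigenvectorBasis (M : Matrix m n ℝ) (hX : (Mᴴ * M).IsHermitian)
    (i : n) : ‖toEuclideanLin M (hX.eigenvectorBasis i)‖ = √(hX.eigenvalues i) := by
  rw [norm_eq_sqrt_real_inner, inner_toEuclideanLin_eigenvectorBasis, if_pos rfl]

end Matrix

open scoped MatrixOrder in
theorem nuclearNorm_eq_trace_of_mul_self_eq {m n : ℕ} {M : Matrix (Fin m) (Fin n) ℝ}
    {P : Matrix (Fin n) (Fin n) ℝ} (hP : P.PosSemidef) (h : P * P = Mᴴ * M) :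
    nuclearNorm M = P.trace := by
  rw [nuclearNorm, PosSemidef.sqrt_eq_cfcSqrt,
    (CFC.sqrt_eq_iff _ _ (posSemidef_conjTranspose_mul_self M).nonneg hP.nonneg).mpr h]

theorem nuclearNorm_mul_transpose_le {m n : ℕ} {r : Type*} [Fintype r]
    (A : Matrix (Fin m) r ℝ) (B : Matrix (Fin n) r ℝ) :
    nuclearNorm (A * Bᵀ) ≤ ((Aᵀ * A).trace + (Bᵀ * B).trace) / 2 := by
  set M := A * Bᵀ
  have hX := isHermitian_conjTranspose_mul_self M
  set q := hX.eigenvectorBasis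
  set w := fun i ↦ toEuclideanLin M (q i)
  set p := fun i ↦ ‖w i‖⁻¹ • w i
  have hw : Pairwise fun i j ↦ ⟪w i, w j⟫_ℝ = 0 := fun i j hij ↦ by
    simp only [w, q, inner_toEuclideanLin_eigenvectorBasis M hX, if_neg hij]
  have hterm : ∀ i,
      ‖w i‖ ≤ (‖toEuclideanLin Aᵀ (p i)‖ ^ 2 + ‖toEuclideanLin Bᵀ (q i)‖ ^ 2) / 2 := by
    intro i
    calc ‖w i‖ = ⟪p i, w i⟫_ℝ := by
          rw [real_inner_smul_left, real_inner_self_eq_norm_sq, sq, ← mul_assoc,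
            inv_mul_mul_self]
      _ = ⟪toEuclideanLin Aᵀ (p i), toEuclideanLin Bᵀ (q i)⟫_ℝ :=
          inner_toEuclideanLin_mul_transpose A B _ _
      _ ≤ _ := by
          nlinarith [real_inner_le_norm (toEuclideanLin Aᵀ (p i)) (toEuclideanLin Bᵀ (q i)),
            two_mul_le_add_sq ‖toEuclideanLin Aᵀ (p i)‖ ‖toEuclideanLin Bᵀ (q i)‖]
  have hA := sum_norm_toEuclideanLin_transpose_sq_le_trace A Finset.univ p
    (sum_inner_inv_norm_smul_sq_le hw Finset.univ)
  have hB := sum_norm_toEuclideanLin_transpose_sq_le_trace B Finset.univ q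
    fun x ↦ by simpa using q.orthonormal.sum_inner_products_le x
  have hnorm : nuclearNorm M = ∑ i, ‖w i‖ := by
    simp only [nuclearNorm, PosSemidef.trace_sqrt, w, q,
      norm_toEuclideanLin_eigenvectorBasis M hX]
    rfl
  calc nuclearNorm M = ∑ i, ‖w i‖ := hnorm
    _ ≤ ∑ i, (‖toEuclideanLin Aᵀ (p i)‖ ^ 2 + ‖toEuclideanLin Bᵀ (q i)‖ ^ 2) / 2 :=
        Finset.sum_le_sum fun i _ ↦ hterm i
    _ ≤ _ := by
        rw [← Finset.sum_div, Finset.sum_add_distrib]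
        linarith

section Factorization

variable {m n : ℕ} {r : Type*} [Fintype r] [DecidableEq r]
  (U : Matrix (Fin m) r ℝ) (V : Matrix (Fin n) r ℝ) {D : Matrix r r ℝ}

theorem nuclearNorm_mul_mul_transpose_le (hD : D.PosSemidef) (horth : Uᵀ * U + Vᵀ * V = 1) :
    nuclearNorm (U * D * Vᵀ) ≤ D.trace / 2 := by
  obtain ⟨S, hS⟩ := hD.exists_eq_conjTranspose_mul_self
  rw [conjTranspose_eq_transpose_of_trivial] at hS
  have hfactor : U * D * Vᵀ = (U * Sᵀ) * (V * Sᵀ)ᵀ := by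
    simp only [hS, transpose_mul, transpose_transpose, Matrix.mul_assoc]
  have htrace : ((U * Sᵀ)ᵀ * (U * Sᵀ)).trace + ((V * Sᵀ)ᵀ * (V * Sᵀ)).trace = D.trace := by
    rw [← trace_add, hS, trace_mul_comm Sᵀ]
    simp only [transpose_mul, transpose_transpose, Matrix.mul_assoc, ← Matrix.mul_add]
    rw [← Matrix.mul_assoc Uᵀ, ← Matrix.mul_assoc Vᵀ, ← Matrix.add_mul, horth, Matrix.one_mul]
  simpa only [hfactor, htrace] using nuclearNorm_mul_transpose_le (U * Sᵀ) (V * Sᵀ)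

theorem nuclearNorm_mul_mul_transpose_eq (hD : D.PosSemidef) (hU : Uᵀ * U = (2 : ℝ)⁻¹ • 1)
    (hV : Vᵀ * V = (2 : ℝ)⁻¹ • 1) : nuclearNorm (U * D * Vᵀ) = D.trace / 2 := by
  have hDt : Dᵀ = D := by simpa using hD.isHermitian.eq
  have hsqrt : V * D * Vᵀ * (V * D * Vᵀ) = (U * D * Vᵀ)ᴴ * (U * D * Vᵀ) := by
    simp only [conjTranspose_eq_transpose_of_trivial, transpose_mul, transpose_transpose, hDt,
      Matrix.mul_assoc]
    rw [← Matrix.mul_assoc Vᵀ V, ← Matrix.mul_assoc Uᵀ U, hU, hV]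
  have hpsd : (V * D * Vᵀ).PosSemidef := by simpa using hD.mul_mul_conjTranspose_same V
  rw [nuclearNorm_eq_trace_of_mul_self_eq hpsd hsqrt, trace_mul_cycle, hV, Matrix.smul_mul,
    Matrix.one_mul, trace_smul, smul_eq_mul]
  ring

end Factorization

/-- If `M = U D Vᵀ` with `D ≻ 0` and the stacked matrix `[U; V]` has orthonormal
columns (`UᵀU + VᵀV = I`), then `‖M‖_* ≤ trace(D)/2`, with equality when `U` and
`V` are compact SVD factors scaled by `1/√2` (i.e. `UᵀU = VᵀV = (1/2)·I`). -/
theorem nuclearNorm_le_half_trace (m n r : ℕ) (M : Matrix (Fin m) (Fin n) ℝ)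
    (U : Matrix (Fin m) (Fin r) ℝ) (V : Matrix (Fin n) (Fin r) ℝ)
    (D : Matrix (Fin r) (Fin r) ℝ) (hD : D.PosDef)
    (horth : Uᵀ * U + Vᵀ * V = 1) (hM : M = U * D * Vᵀ) :
    nuclearNorm M ≤ D.trace / 2 ∧
    (Uᵀ * U = (2 : ℝ)⁻¹ • 1 → Vᵀ * V = (2 : ℝ)⁻¹ • 1 →
      nuclearNorm M = D.trace / 2) := by
  subst hM
  exact ⟨nuclearNorm_mul_mul_transpose_le U V hD.posSemidef horth,
    nuclearNorm_mul_mul_transpose_eq U V hD.posSemidef⟩
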